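/- Let h be the morphism on {0,1,2}* with h(0)=12, h(1)=102, h(2)=0. If the infinite fixed point h^ω(1) is squarefree (in particular avoids the square 11), then h^ω(1) avoids 0210 as a subword. -/
import Mathlib


def Occurs (u w : List (Fin 3)) : Prop := u <:+: w

def SqFree (w : List (Fin 3)) : Prop :=
  ∀ x : List (Fin 3), x ≠ [] → ¬ Occurs (x ++ x) w

def OccursInf (u : List (Fin 3)) (w : ℕ → Fin 3) : Prop :=
  ∃ i : ℕ, u = (List.range u.length).map (fun j => w (i + j))

def SqFreeInf (w : ℕ → Fin 3) : Prop :=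
  ∀ x : List (Fin 3), x ≠ [] → ¬ OccursInf (x ++ x) w


def hmor (a : Fin 3) : List (Fin 3) :=
  if a = 0 then [1, 2] else if a = 1 then [1, 0, 2] else [0]

def hiter : ℕ → List (Fin 3)
  | 0 => [1]
  | n + 1 => (hiter n).flatMap hmor

/-- the fixed point h^ω(1) as an infinite word -/
def hw (i : ℕ) : Fin 3 := (hiter (i + 1)).getD i 1

lemma fin3_cases (a : Fin 3) : a = 0 ∨ a = 1 ∨ a = 2 := by fin_cases a <;> simp

lemma hmor_len_pos (a : Fin 3) : 1 ≤ (hmor a).length := by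
  rcases fin3_cases a with rfl | rfl | rfl <;> simp [hmor]

lemma flatMap_len (l : List (Fin 3)) : l.length ≤ (l.flatMap hmor).length := by
  induction l with
  | nil => simp
  | cons a t ih =>
    have := hmor_len_pos a
    simp only [List.flatMap_cons, List.length_append, List.length_cons]
    omega

lemma hiter_prefix_succ (n : ℕ) : hiter n <+: hiter (n + 1) := by
  induction n with
  | zero => exact ⟨[0, 2], rfl⟩
  | succ n ih =>
    obtain ⟨t, ht⟩ := ih
    refine ⟨t.flatMap hmor, ?_⟩
    have h2 : hiter (n+2) = (hiter n ++ t).flatMap hmor := by rw [ht]; rfl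
    rw [h2, List.flatMap_append]
    rfl

lemma hiter_prefix {m n : ℕ} (h : m ≤ n) : hiter m <+: hiter n := by
  induction n with
  | zero => simp [Nat.le_zero.mp h]
  | succ n ih =>
    rcases Nat.lt_or_ge m (n+1) with h' | h'
    · exact (ih (Nat.lt_succ_iff.mp h')).trans (hiter_prefix_succ n)
    · have : m = n + 1 := le_antisymm h h'
      simp [this]

lemma hiter_len (n : ℕ) : 2 * n + 1 ≤ (hiter n).length := by
  induction n with
  | zero => simp [hiter]
  | succ n ih =>
    obtain ⟨t, ht⟩ := hiter_prefix (Nat.zero_le n)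
    have h1 : hiter n = 1 :: t := by simpa [hiter] using ht.symm
    have h2 : hiter (n+1) = [1, 0, 2] ++ t.flatMap hmor := by
      rw [show hiter (n+1) = (hiter n).flatMap hmor from rfl, h1]
      rfl
    have h3 := flatMap_len t
    have h4 : (hiter n).length = t.length + 1 := by simp [h1]
    simp only [h2, List.length_append]
    simp at *
    omega

lemma hw_eq {n i : ℕ} (h : i < (hiter n).length) : hw i = (hiter n).getD i 1 := by
  show (hiter (i+1)).getD i 1 = _
  rcases Nat.le_total (i+1) n with h' | h'
  · obtain ⟨t, ht⟩ := hiter_prefix h'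
    have hi : i < (hiter (i+1)).length := by have := hiter_len (i+1); omega
    rw [← ht, List.getD_append _ _ _ _ hi]
  · obtain ⟨t, ht⟩ := hiter_prefix h'
    rw [← ht, List.getD_append _ _ _ _ h]

lemma occurs_of_occursInf {u : List (Fin 3)} (h : OccursInf u hw) :
    ∃ n, Occurs u (hiter n) := by
  obtain ⟨i, hi⟩ := h
  refine ⟨i + u.length, ?_⟩
  set n := i + u.length with hn
  have hlen : i + u.length ≤ (hiter n).length := by have := hiter_len n; omega
  have key : u = ((hiter n).drop i).take u.length := by
    apply List.ext_getElem
    · simp; omega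
    · intro j h1 h2
      have hju : j < u.length := h1
      have e1 : u[j] = hw (i + j) := by
        rw [List.getElem_of_eq hi]
        simp
      rw [e1, hw_eq (n := n) (by omega)]
      rw [List.getElem_take, List.getElem_drop]
      rw [List.getD_eq_getElem _ _ (by omega)]
  rw [key]
  exact ((List.take_prefix _ _).isInfix).trans (List.drop_suffix _ _).isInfix

lemma occursInf_of_occurs {u : List (Fin 3)} {n : ℕ} (h : Occurs u (hiter n)) :
    OccursInf u hw := by
  obtain ⟨s, t, hst⟩ := h
  refine ⟨s.length, ?_⟩
  apply List.ext_getElem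
  · simp
  · intro j h1 h2
    simp only [List.getElem_map, List.getElem_range]
    have hj : s.length + j < (hiter n).length := by
      rw [← hst]; simp; omega
    rw [hw_eq hj, List.getD_eq_getElem _ _ hj]
    rw [List.getElem_of_eq hst.symm hj]
    rw [List.getElem_append_left (by simp; omega)]
    rw [List.getElem_append_right (by omega)]
    congr 1
    omega

lemma flatMap_not_start_two (t : List (Fin 3)) (u : List (Fin 3)) :
    ¬ ((2 : Fin 3) :: u <+: t.flatMap hmor) := by
  cases t with
  | nil => simp
  | cons b t' =>
    intro h
    rw [show (b :: t').flatMap hmor = hmor b ++ t'.flatMap hmor from rfl] at h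
    rcases fin3_cases b with rfl | rfl | rfl <;>
      simp [hmor, List.cons_prefix_cons] at h

lemma flatMap_start_10 (t u : List (Fin 3))
    (h : (1 : Fin 3) :: (0 : Fin 3) :: u <+: t.flatMap hmor) :
    ∃ t', t = 1 :: t' := by
  cases t with
  | nil => simp at h
  | cons b t' =>
    rw [show (b :: t').flatMap hmor = hmor b ++ t'.flatMap hmor from rfl] at h
    rcases fin3_cases b with rfl | rfl | rfl
    · exfalso
      simp [hmor, List.cons_prefix_cons] at h
    · exact ⟨t', rfl⟩
    · exfalso
      simp [hmor, List.cons_prefix_cons] at h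

lemma key_lemma : ∀ w : List (Fin 3), [0,2,1,0] <:+: w.flatMap hmor → [1,1] <:+: w := by
  intro w
  induction w with
  | nil => simp
  | cons a t ih =>
    intro h
    rw [show (a :: t).flatMap hmor = hmor a ++ t.flatMap hmor from rfl] at h
    rcases fin3_cases a with rfl | rfl | rfl
    · -- hmor 0 = [1,2]
      rw [show hmor 0 ++ t.flatMap hmor = 1 :: 2 :: t.flatMap hmor from rfl,
        List.infix_cons_iff, List.infix_cons_iff] at h
      rcases h with h | h | h
      · exfalso
        rw [List.cons_prefix_cons] at h
        exact absurd h.1 (by decide)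
      · exfalso
        rw [List.cons_prefix_cons] at h
        exact absurd h.1 (by decide)
      · exact (ih h).trans (List.suffix_cons _ _).isInfix
    · -- hmor 1 = [1,0,2]
      rw [show hmor 1 ++ t.flatMap hmor = 1 :: 0 :: 2 :: t.flatMap hmor from rfl,
        List.infix_cons_iff, List.infix_cons_iff, List.infix_cons_iff] at h
      rcases h with h | h | h | h
      · exfalso
        rw [List.cons_prefix_cons] at h
        exact absurd h.1 (by decide)
      · rw [List.cons_prefix_cons, List.cons_prefix_cons] at h
        obtain ⟨t', ht'⟩ := flatMap_start_10 t _ h.2.2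
        subst ht'
        exact ⟨[], t', rfl⟩
      · exfalso
        rw [List.cons_prefix_cons] at h
        exact absurd h.1 (by decide)
      · exact (ih h).trans (List.suffix_cons _ _).isInfix
    · -- hmor 2 = [0]
      rw [show hmor 2 ++ t.flatMap hmor = 0 :: t.flatMap hmor from rfl,
        List.infix_cons_iff] at h
      rcases h with h | h
      · exfalso
        rw [List.cons_prefix_cons] at h
        exact flatMap_not_start_two t _ h.2
      · exact (ih h).trans (List.suffix_cons _ _).isInfix

theorem squarefree_implies_avoids_0210 (hsf : SqFreeInf hw) :
    ¬ OccursInf [0,2,1,0] hw := by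
  intro hocc
  obtain ⟨n, hn⟩ := occurs_of_occursInf hocc
  cases n with
  | zero =>
    have := List.IsInfix.length_le hn
    simp [hiter] at this
  | succ m =>
    have h11 : Occurs [1,1] (hiter m) := key_lemma (hiter m) hn
    exact hsf [1] (by simp) (occursInf_of_occurs h11)
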